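/- Let ρ : ℝ^d → ℝ be continuous and integrable with ρ(0) = 1, |ρ(t)| ≤ 1 for all t, inf_t ρ(t) > −1, and such that for every ε > 0, sup_{t ∉ (−ε,ε)^d} |ρ(t)| < 1. Let u_T be a function of T tending to ∞ as T → ∞. Then for every ε > 0, as T → ∞, ∫_{[−T,T]^d} Π_{j=1}^d (T − |t_j|) ( ∫_0^{ρ(t)} φ(u_T,u_T,y) dy ) dt is asymptotically equivalent to T^d ∫_{[−ε,ε]^d} ( ∫_0^{ρ(t)} φ(u_T,u_T,y) dy ) dt, i.e. the ratio of the two quantities tends to 1. -/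

import Mathlib

/-!
Write `g_u(t) = ∫_0^{ρ(t)} φ(u,u,y) dy` and `G(u) = ∫_{[-ε,ε]^d} g_u`. On the cube `[-ε,ε]^d` the
weight `∏ (T - |t_j|)` is `T^d (1 + O(ε/T))`, and `∫_{[-ε,ε]^d} |g_u| ≤ G(u) + O(e^{-u²})` because
`g_u ≥ -C e^{-u²}` (`ρ` stays away from `-1`). Off the cube `|ρ| ≤ η < 1`, so
`|g_u| ≤ C e^{-u²/(1+η)} |ρ|` and, `ρ` being integrable, that region contributes
`O(T^d e^{-u²/(1+η)})`. Near `0` we have `ρ ≥ θ` for some `θ > μ > η`, whence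
`G(u) ≳ e^{-u²/(1+μ)}`, which dominates both error terms as `u → ∞`.
-/

open MeasureTheory Filter

/-- The density at `(u,u)` of the centered bivariate Gaussian vector with unit variances
and correlation `y`: `φ(u,u,y) = exp(-u²/(1+y)) / (2π √(1-y²))`. -/
noncomputable def biGaussDensity (u y : ℝ) : ℝ :=
  Real.exp (-u ^ 2 / (1 + y)) / (2 * Real.pi * Real.sqrt (1 - y ^ 2))

open Real Set Metric Asymptotics Topology

noncomputable def biGaussIntegral (u p : ℝ) : ℝ :=
  ∫ y in (0 : ℝ)..p, biGaussDensity u y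

/-- Since `1 - y² ≥ (1 - r)(1 + m)` for `m ≤ y ≤ r`, this bounds `φ(u,u,y)` on `[m, r]`. -/
noncomputable def biGaussBound (m r u : ℝ) : ℝ :=
  exp (-u ^ 2 / (1 + r)) / (2 * π * √((1 - r) * (1 + m)))

lemma biGaussDensity_nonneg (u y : ℝ) : 0 ≤ biGaussDensity u y := by
  unfold biGaussDensity
  positivity

lemma biGaussBound_nonneg (m r u : ℝ) : 0 ≤ biGaussBound m r u := by
  unfold biGaussBound
  positivity

lemma biGaussDensity_le_biGaussBound {m y r : ℝ} (u : ℝ) (hm : -1 < m) (hmy : m ≤ y)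
    (hyr : y ≤ r) (hr : r < 1) : biGaussDensity u y ≤ biGaussBound m r u := by
  have hsqrt : 0 < √((1 - r) * (1 + m)) := sqrt_pos.2 (by nlinarith)
  have hexp : exp (-u ^ 2 / (1 + y)) ≤ exp (-u ^ 2 / (1 + r)) := by
    gcongr exp ?_
    rw [neg_div, neg_div, neg_le_neg_iff]
    exact div_le_div_of_nonneg_left (sq_nonneg u) (by linarith) (by linarith)
  unfold biGaussDensity biGaussBound
  gcongr
  nlinarith

lemma biGaussDensity_le_inv_sqrt {m y : ℝ} (u : ℝ) (hm : -1 < m) (hmy : m ≤ y)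
    (hy : y ≤ 1) : biGaussDensity u y ≤ (2 * π * √(1 + m))⁻¹ * (√(1 - y))⁻¹ := by
  rcases hy.eq_or_lt with rfl | hy
  · -- at `y = 1` both sides are junk values `x / 0 = 0`
    simp [biGaussDensity]
  have hexp : exp (-u ^ 2 / (1 + y)) ≤ 1 :=
    exp_le_one_iff.2 (div_nonpos_of_nonpos_of_nonneg (neg_nonpos.2 (sq_nonneg u)) (by linarith))
  have hsqrt : √(1 - y) * √(1 + m) ≤ √(1 - y ^ 2) := by
    rw [← sqrt_mul (by linarith)]
    exact sqrt_le_sqrt (by nlinarith)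
  have : 0 < √(1 - y) * √(1 + m) :=
    mul_pos (sqrt_pos.2 (by linarith)) (sqrt_pos.2 (by linarith))
  calc biGaussDensity u y ≤ 1 / (2 * π * (√(1 - y) * √(1 + m))) := by
        unfold biGaussDensity; gcongr
    _ = (2 * π * √(1 + m))⁻¹ * (√(1 - y))⁻¹ := by field_simp

lemma integrableOn_biGaussDensity {m : ℝ} (u : ℝ) (hm : -1 < m) :
    IntegrableOn (biGaussDensity u) (Icc m 1) := by
  rcases lt_or_ge 1 m with h1m | hm1
  · simp [Icc_eq_empty_of_lt h1m]
  have hsing : IntegrableOn (fun y : ℝ => (1 - y) ^ (-(1 / 2) : ℝ)) (Icc m 1) := by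
    rw [← intervalIntegrable_iff_integrableOn_Icc_of_le hm1]
    simpa using (intervalIntegral.intervalIntegrable_rpow' (a := 1 - m) (b := 1 - 1)
      (by norm_num : (-1 : ℝ) < -(1 / 2))).comp_sub_left 1
  have hmeas : Measurable (biGaussDensity u) := by unfold biGaussDensity; fun_prop
  refine (hsing.const_mul (2 * π * √(1 + m))⁻¹).mono' hmeas.aestronglyMeasurable ?_
  refine (ae_restrict_iff' measurableSet_Icc).2 (Eventually.of_forall fun y hy => ?_)
  rw [norm_of_nonneg (biGaussDensity_nonneg u y), rpow_neg (by linarith [hy.2]),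
    ← sqrt_eq_rpow]
  exact biGaussDensity_le_inv_sqrt u hm hy.1 hy.2

lemma continuousOn_biGaussIntegral {m : ℝ} (u : ℝ) (hm : -1 < m) (hm0 : m ≤ 0) :
    ContinuousOn (biGaussIntegral u) (Icc m 1) := by
  have huIcc : uIcc m 1 = Icc m 1 := uIcc_of_le (by linarith)
  rw [← huIcc]
  exact intervalIntegral.continuousOn_primitive_interval'
    (huIcc ▸ integrableOn_biGaussDensity u hm).intervalIntegrable (by simp [huIcc, hm0])

lemma abs_biGaussIntegral_le {m p r : ℝ} (u : ℝ) (hm : -1 < m) (hm0 : m ≤ 0) (hmp : m ≤ p)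
    (hpr : p ≤ r) (hr0 : 0 ≤ r) (hr : r < 1) :
    |biGaussIntegral u p| ≤ biGaussBound m r u * |p| := by
  have hbound : ∀ y ∈ uIoc 0 p, ‖biGaussDensity u y‖ ≤ biGaussBound m r u := fun y hy => by
    have hy' : m ≤ y ∧ y ≤ r := by
      rcases mem_uIoc.1 hy with h | h <;> constructor <;> linarith [h.1, h.2]
    rw [norm_of_nonneg (biGaussDensity_nonneg u y)]
    exact biGaussDensity_le_biGaussBound u hm hy'.1 hy'.2 hr
  simpa [biGaussIntegral] using intervalIntegral.norm_integral_le_of_norm_le_const hbound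

lemma neg_biGaussBound_le_biGaussIntegral {m p : ℝ} (u : ℝ) (hm : -1 < m) (hmp : m ≤ p) :
    -biGaussBound m 0 u ≤ biGaussIntegral u p := by
  rcases le_or_gt 0 p with hp | hp
  · exact (neg_nonpos.2 (biGaussBound_nonneg m 0 u)).trans
      (intervalIntegral.integral_nonneg hp fun y _ => biGaussDensity_nonneg u y)
  have habs := abs_biGaussIntegral_le u hm (by linarith) hmp hp.le le_rfl one_pos
  have hp1 : |p| ≤ 1 := by rw [abs_of_neg hp]; linarith
  have := mul_le_of_le_one_right (biGaussBound_nonneg m 0 u) hp1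
  linarith [neg_abs_le (biGaussIntegral u p)]

lemma exp_div_two_pi_le_biGaussDensity {μ y : ℝ} (u : ℝ) (hμ : 0 ≤ μ) (hμy : μ ≤ y)
    (hy : y < 1) : exp (-u ^ 2 / (1 + μ)) / (2 * π) ≤ biGaussDensity u y := by
  have hsqrt : √(1 - y ^ 2) ≤ 1 := sqrt_le_one.2 (by nlinarith)
  have hsqrt0 : 0 < √(1 - y ^ 2) := sqrt_pos.2 (by nlinarith)
  unfold biGaussDensity
  refine div_le_div₀ (exp_pos _).le ?_ (by positivity)
    (mul_le_of_le_one_right (by positivity) hsqrt)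
  gcongr exp ?_
  rw [neg_div, neg_div, neg_le_neg_iff]
  exact div_le_div_of_nonneg_left (sq_nonneg u) (by linarith) (by linarith)

lemma le_biGaussIntegral {μ θ p : ℝ} (u : ℝ) (hμ : 0 ≤ μ) (hμθ : μ ≤ θ) (hθ : θ < 1)
    (hθp : θ ≤ p) (hp : p ≤ 1) :
    (θ - μ) * (exp (-u ^ 2 / (1 + μ)) / (2 * π)) ≤ biGaussIntegral u p := by
  have hint : IntervalIntegrable (biGaussDensity u) volume 0 p :=
    ((integrableOn_biGaussDensity u (m := 0) (by norm_num)).mono_set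
      (by rw [uIcc_of_le (by linarith)]; exact Icc_subset_Icc le_rfl hp)).intervalIntegrable
  calc (θ - μ) * (exp (-u ^ 2 / (1 + μ)) / (2 * π))
      = ∫ _ in μ..θ, exp (-u ^ 2 / (1 + μ)) / (2 * π) := by
        rw [intervalIntegral.integral_const, smul_eq_mul]
    _ ≤ ∫ y in μ..θ, biGaussDensity u y :=
        intervalIntegral.integral_mono_on hμθ intervalIntegrable_const
          (hint.mono_set (by rw [uIcc_of_le hμθ, uIcc_of_le (by linarith)]; gcongr))
          fun y hy => exp_div_two_pi_le_biGaussDensity u hμ hy.1 (hy.2.trans_lt hθ)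
    _ ≤ biGaussIntegral u p :=
        intervalIntegral.integral_mono_interval hμ hμθ hθp
          (Eventually.of_forall fun y => biGaussDensity_nonneg u y) hint

lemma isLittleO_biGaussBound {r μ : ℝ} (m : ℝ) (hr : -1 < r) (hrμ : r < μ) :
    biGaussBound m r =o[atTop] fun u => exp (-u ^ 2 / (1 + μ)) := by
  have hgap : 0 < 1 / (1 + r) - 1 / (1 + μ) := by
    rw [sub_pos]; exact one_div_lt_one_div_of_lt (by linarith) (by linarith)
  have hexp :
      (fun u : ℝ => exp (-u ^ 2 / (1 + r))) =o[atTop] fun u => exp (-u ^ 2 / (1 + μ)) := by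
    refine isLittleO_exp_comp_exp_comp.2 ?_
    have := (tendsto_pow_atTop two_ne_zero).const_mul_atTop hgap
    refine this.congr fun u => ?_
    ring
  refine (hexp.const_mul_left (2 * π * √((1 - r) * (1 + m)))⁻¹).congr_left fun u => ?_
  rw [biGaussBound, inv_mul_eq_div]

section SetIntegral

variable {X : Type*} [MeasurableSpace X] {μ : Measure X} {s S : Set X} {g : X → ℝ} {a b : ℝ}

lemma setIntegral_abs_le_add (hs : MeasurableSet s) (hμs : μ s ≠ ⊤) (hg : IntegrableOn g s μ)
    (hb : 0 ≤ b) (hgb : ∀ x ∈ s, -b ≤ g x) :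
    ∫ x in s, |g x| ∂μ ≤ ∫ x in s, g x ∂μ + 2 * b * μ.real s := by
  have hconst : IntegrableOn (fun _ => 2 * b) s μ := integrableOn_const hμs
  calc ∫ x in s, |g x| ∂μ ≤ ∫ x in s, (g x + 2 * b) ∂μ :=
        setIntegral_mono_on hg.abs (hg.add hconst) hs fun x hx =>
          abs_le.2 ⟨by linarith [hgb x hx], by linarith⟩
    _ = ∫ x in s, g x ∂μ + 2 * b * μ.real s := by
        rw [integral_add hg hconst, setIntegral_const, smul_eq_mul, mul_comm]

lemma le_setIntegral_of_le_on_subset (hsS : s ⊆ S) (hs : MeasurableSet s) (hS : MeasurableSet S)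
    (hμS : μ S ≠ ⊤) (hg : IntegrableOn g S μ) (hb : 0 ≤ b) (hga : ∀ x ∈ s, a ≤ g x)
    (hgb : ∀ x ∈ S, -b ≤ g x) :
    a * μ.real s - b * μ.real S ≤ ∫ x in S, g x ∂μ := by
  have hnear : a * μ.real s ≤ ∫ x in s, g x ∂μ :=
    setIntegral_ge_of_const_le_real hs (ne_top_of_le_ne_top hμS (measure_mono hsS)) hga
      (hg.mono_set hsS)
  have hfar : -b * μ.real (S \ s) ≤ ∫ x in S \ s, g x ∂μ :=
    setIntegral_ge_of_const_le_real (hS.diff hs)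
      (ne_top_of_le_ne_top hμS (measure_mono sdiff_subset)) (fun x hx => hgb x hx.1)
      (hg.mono_set sdiff_subset)
  have hμ : μ.real (S \ s) ≤ μ.real S := measureReal_mono sdiff_subset hμS
  rw [setIntegral_sdiff hs hg hsS] at hfar
  nlinarith

end SetIntegral

lemma isBigO_and_eventually_pos_of_le_sub {α : Type*} {l : Filter α} {e h G : α → ℝ} {A : ℝ}
    (hA : 0 < A) (he : ∀ᶠ x in l, 0 < e x) (hh : h =o[l] e) (hG : ∀ x, A * e x - h x ≤ G x) :
    e =O[l] G ∧ ∀ᶠ x in l, 0 < G x := by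
  have hhalf : ∀ᶠ x in l, A / 2 * e x ≤ G x := by
    filter_upwards [hh.bound (half_pos hA), he] with x hx hex
    rw [Real.norm_eq_abs, Real.norm_eq_abs, abs_of_pos hex] at hx
    linarith [hG x, le_abs_self (h x)]
  refine ⟨IsBigO.of_bound (2 / A) ?_, ?_⟩
  · filter_upwards [hhalf, he] with x hx hex
    have hGx : 0 < G x := lt_of_lt_of_le (by positivity) hx
    rw [Real.norm_eq_abs, Real.norm_eq_abs, abs_of_pos hex, abs_of_pos hGx]
    rw [div_mul_eq_mul_div, le_div_iff₀ hA]
    linarith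
  · filter_upwards [hhalf, he] with x hx hex
    exact lt_of_lt_of_le (by positivity) hx

section Cube

variable {ι : Type*} [Fintype ι]

lemma Icc_neg_const_const_eq_closedBall {r : ℝ} (hr : 0 ≤ r) :
    Icc (fun _ : ι => -r) (fun _ => r) = closedBall 0 r := by
  rw [← pi_univ_Icc, closedBall_pi _ hr]
  simp [Real.closedBall_eq_Icc]

lemma pi_univ_Ioo_neg_const_const_eq_ball {r : ℝ} (hr : 0 < r) :
    pi univ (fun _ : ι => Ioo (-r) r) = ball 0 r := by
  rw [ball_pi _ hr]
  simp [Real.ball_eq_Ioo]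

lemma volume_real_pi_closedBall (a : ι → ℝ) {r : ℝ} (hr : 0 ≤ r) :
    volume.real (closedBall a r) = (2 * r) ^ Fintype.card ι := by
  rw [measureReal_def, Real.volume_pi_closedBall a hr, ENNReal.toReal_ofReal (by positivity)]

lemma prod_sub_abs_nonneg {T : ℝ} {t : ι → ℝ} (ht : t ∈ closedBall 0 T) :
    0 ≤ ∏ i, (T - |t i|) :=
  Finset.prod_nonneg fun i _ => sub_nonneg.2 <|
    (norm_le_pi_norm t i).trans (mem_closedBall_zero_iff.1 ht)

lemma prod_sub_abs_le_pow {T : ℝ} {t : ι → ℝ} (ht : t ∈ closedBall 0 T) :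
    ∏ i, (T - |t i|) ≤ T ^ Fintype.card ι := by
  rw [← Finset.card_univ, ← Finset.prod_const]
  exact Finset.prod_le_prod
    (fun i _ => sub_nonneg.2 ((norm_le_pi_norm t i).trans (mem_closedBall_zero_iff.1 ht)))
    fun i _ => sub_le_self _ (abs_nonneg _)

lemma pow_sub_le_prod_sub_abs {ε T : ℝ} {t : ι → ℝ} (ht : t ∈ closedBall 0 ε) (hεT : ε ≤ T) :
    (T - ε) ^ Fintype.card ι ≤ ∏ i, (T - |t i|) := by
  rw [← Finset.card_univ, ← Finset.prod_const]
  exact Finset.prod_le_prod (fun _ _ => sub_nonneg.2 hεT)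
    fun i _ => sub_le_sub_left ((norm_le_pi_norm t i).trans (mem_closedBall_zero_iff.1 ht)) _

lemma abs_prod_sub_abs_sub_pow_le {ε T : ℝ} {t : ι → ℝ} (ht : t ∈ closedBall 0 ε)
    (hεT : ε ≤ T) :
    |∏ i, (T - |t i|) - T ^ Fintype.card ι| ≤ T ^ Fintype.card ι - (T - ε) ^ Fintype.card ι := by
  have hle := prod_sub_abs_le_pow (closedBall_subset_closedBall hεT ht)
  rw [abs_sub_comm, abs_of_nonneg (sub_nonneg.2 hle)]
  linarith [pow_sub_le_prod_sub_abs ht hεT]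

lemma abs_setIntegral_weight_mul_sub_le {g f : (ι → ℝ) → ℝ} {c ε T : ℝ}
    (hg : Continuous g) (hf : Integrable f) (hf0 : 0 ≤ f) (hc : 0 ≤ c) (hε : 0 ≤ ε)
    (hεT : ε ≤ T) (hgf : ∀ t ∉ closedBall 0 ε, |g t| ≤ c * f t) :
    |(∫ t in closedBall 0 T, (∏ i, (T - |t i|)) * g t) -
        T ^ Fintype.card ι * ∫ t in closedBall 0 ε, g t|
      ≤ (T ^ Fintype.card ι - (T - ε) ^ Fintype.card ι) * (∫ t in closedBall 0 ε, |g t|) +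
        T ^ Fintype.card ι * (c * ∫ t, f t) := by
  set n := Fintype.card ι
  set W : (ι → ℝ) → ℝ := fun t => ∏ i, (T - |t i|)
  have hW : Continuous W := by fun_prop
  have hsub : closedBall (0 : ι → ℝ) ε ⊆ closedBall 0 T := closedBall_subset_closedBall hεT
  have hWg : IntegrableOn (fun t => W t * g t) (closedBall 0 T) :=
    (hW.mul hg).continuousOn.integrableOn_compact (isCompact_closedBall 0 T)
  have hgε : IntegrableOn g (closedBall 0 ε) :=
    hg.continuousOn.integrableOn_compact (isCompact_closedBall 0 ε)
  have hsplit : (∫ t in closedBall 0 T, W t * g t) - T ^ n * ∫ t in closedBall 0 ε, g t =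
      (∫ t in closedBall 0 ε, (W t - T ^ n) * g t) +
        ∫ t in closedBall 0 T \ closedBall 0 ε, W t * g t := by
    simp_rw [sub_mul]
    rw [setIntegral_sdiff measurableSet_closedBall hWg hsub,
      integral_sub (hWg.mono_set hsub) (hgε.const_mul _), integral_const_mul]
    ring
  have hnear : |∫ t in closedBall 0 ε, (W t - T ^ n) * g t| ≤
      (T ^ n - (T - ε) ^ n) * ∫ t in closedBall 0 ε, |g t| := by
    rw [← integral_const_mul (T ^ n - (T - ε) ^ n)]
    refine norm_integral_le_of_norm_le (f := fun t => (W t - T ^ n) * g t)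
      (hgε.abs.const_mul _) (ae_restrict_of_forall_mem measurableSet_closedBall fun t ht => ?_)
    rw [norm_mul, Real.norm_eq_abs, Real.norm_eq_abs]
    exact mul_le_mul_of_nonneg_right (abs_prod_sub_abs_sub_pow_le ht hεT) (abs_nonneg _)
  have hfar :
      |∫ t in closedBall 0 T \ closedBall 0 ε, W t * g t| ≤ T ^ n * (c * ∫ t, f t) := by
    have hF : Integrable fun t => T ^ n * (c * f t) := (hf.const_mul c).const_mul _
    calc |∫ t in closedBall 0 T \ closedBall 0 ε, W t * g t|
        ≤ ∫ t in closedBall 0 T \ closedBall 0 ε, T ^ n * (c * f t) :=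
          norm_integral_le_of_norm_le (f := fun t => W t * g t) hF.integrableOn <|
            ae_restrict_of_forall_mem (measurableSet_closedBall.diff measurableSet_closedBall)
              fun t ht => by
                rw [norm_mul, Real.norm_eq_abs, Real.norm_eq_abs,
                  abs_of_nonneg (prod_sub_abs_nonneg ht.1)]
                exact mul_le_mul (prod_sub_abs_le_pow ht.1) (hgf t ht.2) (abs_nonneg _)
                  (pow_nonneg (hε.trans hεT) n)
      _ ≤ ∫ t, T ^ n * (c * f t) :=
          setIntegral_le_integral hF (Eventually.of_forall fun t =>
            mul_nonneg (pow_nonneg (hε.trans hεT) n) (mul_nonneg hc (hf0 t)))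
      _ = T ^ n * (c * ∫ t, f t) := by rw [integral_const_mul, integral_const_mul]
  rw [hsplit]
  exact (abs_add_le _ _).trans (add_le_add hnear hfar)

theorem tendsto_setIntegral_weight_mul_div {g : ℝ → (ι → ℝ) → ℝ} {f : (ι → ℝ) → ℝ}
    {b c uT : ℝ → ℝ} {ε : ℝ} (hε : 0 < ε) (hg : ∀ u, Continuous (g u)) (hf : Integrable f)
    (hf0 : 0 ≤ f) (hb0 : ∀ u, 0 ≤ b u) (hgb : ∀ u t, -b u ≤ g u t) (hc0 : ∀ u, 0 ≤ c u)
    (hgc : ∀ u, ∀ t ∉ closedBall 0 ε, |g u t| ≤ c u * f t)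
    (hbG : b =o[atTop] fun u => ∫ t in closedBall 0 ε, g u t)
    (hcG : c =o[atTop] fun u => ∫ t in closedBall 0 ε, g u t)
    (hGpos : ∀ᶠ u in atTop, 0 < ∫ t in closedBall 0 ε, g u t) (huT : Tendsto uT atTop atTop) :
    Tendsto (fun T => (∫ t in closedBall 0 T, (∏ i, (T - |t i|)) * g (uT T) t) /
      (T ^ Fintype.card ι * ∫ t in closedBall 0 ε, g (uT T) t)) atTop (𝓝 1) := by
  set n := Fintype.card ι
  set G : ℝ → ℝ := fun u => ∫ t in closedBall 0 ε, g u t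
  -- the estimate `abs_setIntegral_weight_mul_sub_le`, divided by `T ^ n * G (uT T)`
  set err : ℝ → ℝ := fun T =>
    (1 - (1 - ε / T) ^ n) * (1 + 2 * (2 * ε) ^ n * (b (uT T) / G (uT T))) +
      (∫ t, f t) * (c (uT T) / G (uT T))
  have herr : Tendsto err atTop (𝓝 0) := by
    have hweight : Tendsto (fun T : ℝ => 1 - (1 - ε / T) ^ n) atTop (𝓝 0) := by
      have h : Tendsto (fun T : ℝ => 1 - ε / T) atTop (𝓝 (1 - 0)) :=
        tendsto_const_nhds.sub (tendsto_const_nhds.div_atTop tendsto_id)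
      simpa using (h.pow n).const_sub 1
    have hb := hbG.tendsto_div_nhds_zero.comp huT
    have hc := hcG.tendsto_div_nhds_zero.comp huT
    simpa using (hweight.mul ((hb.const_mul _).const_add 1)).add (hc.const_mul _)
  have hbound : ∀ᶠ T in atTop, ‖(∫ t in closedBall 0 T, (∏ i, (T - |t i|)) * g (uT T) t) /
      (T ^ n * G (uT T)) - 1‖ ≤ err T := by
    filter_upwards [eventually_ge_atTop ε, huT.eventually hGpos] with T hεT hG
    change 0 < G (uT T) at hG
    have hT : 0 < T := hε.trans_le hεT
    have hest := abs_setIntegral_weight_mul_sub_le (hg (uT T)) hf hf0 (hc0 _) hε.le hεT (hgc _)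
    have habs := setIntegral_abs_le_add measurableSet_closedBall
      (measure_closedBall_lt_top (μ := volume)).ne
      ((hg (uT T)).continuousOn.integrableOn_compact (isCompact_closedBall 0 ε)) (hb0 _)
      fun t _ => hgb _ t
    rw [volume_real_pi_closedBall 0 hε.le] at habs
    have hpow : (T - ε) ^ n ≤ T ^ n := pow_le_pow_left₀ (by linarith) (by linarith) n
    have hTG : 0 < T ^ n * G (uT T) := mul_pos (pow_pos hT n) hG
    rw [Real.norm_eq_abs, div_sub_one hTG.ne', abs_div, abs_of_pos hTG, div_le_iff₀ hTG]
    calc _ ≤ _ := hest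
      _ ≤ (T ^ n - (T - ε) ^ n) * (G (uT T) + 2 * b (uT T) * (2 * ε) ^ n) +
          T ^ n * (c (uT T) * ∫ t, f t) := by gcongr
      _ = err T * (T ^ n * G (uT T)) := by
          have hGne := hG.ne'
          simp only [err]
          rw [one_sub_div hT.ne', div_pow]
          field_simp
  exact tendsto_sub_nhds_zero_iff.1 (squeeze_zero_norm' hbound herr)

lemma exp_isBigO_setIntegral_biGaussIntegral {ρ : (ι → ℝ) → ℝ} {m μ θ ε : ℝ}
    (hρ : Continuous ρ) (hm : -1 < m) (hm0 : m ≤ 0) (hmρ : ∀ t, m ≤ ρ t) (hρ1 : ∀ t, ρ t ≤ 1)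
    (hμ : 0 < μ) (hμθ : μ < θ) (hθρ : θ < ρ 0) (hε : 0 < ε) :
    (fun u => exp (-u ^ 2 / (1 + μ))) =O[atTop]
        (fun u => ∫ t in closedBall 0 ε, biGaussIntegral u (ρ t)) ∧
      ∀ᶠ u in atTop, 0 < ∫ t in closedBall 0 ε, biGaussIntegral u (ρ t) := by
  obtain ⟨δ, hδ, hδρ⟩ := nhds_basis_closedBall.eventually_iff.1 <|
    hρ.continuousAt.eventually (eventually_ge_nhds hθρ)
  set δ' := min δ ε
  have hδ' : 0 < δ' := lt_min hδ hε
  have hθ1 : θ < 1 := hθρ.trans_le (hρ1 0)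
  refine isBigO_and_eventually_pos_of_le_sub
    (A := (2 * δ') ^ Fintype.card ι * ((θ - μ) / (2 * π)))
    (h := fun u => (2 * ε) ^ Fintype.card ι * biGaussBound m 0 u)
    (by have := sub_pos.2 hμθ; positivity) (Eventually.of_forall fun u => exp_pos _)
    ((isLittleO_biGaussBound m (by norm_num) hμ).const_mul_left _) fun u => ?_
  have hlow := le_setIntegral_of_le_on_subset (μ := volume)
    (g := fun t => biGaussIntegral u (ρ t)) (closedBall_subset_closedBall (min_le_right δ ε))
    measurableSet_closedBall measurableSet_closedBall (measure_closedBall_lt_top (μ := volume)).ne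
    (((continuousOn_biGaussIntegral u hm hm0).comp_continuous hρ fun t =>
      ⟨hmρ t, hρ1 t⟩).continuousOn.integrableOn_compact (isCompact_closedBall 0 ε))
    (biGaussBound_nonneg m 0 u)
    (fun t ht => le_biGaussIntegral u hμ.le hμθ.le hθ1
      (hδρ (closedBall_subset_closedBall (min_le_left δ ε) ht)) (hρ1 t))
    fun t _ => neg_biGaussBound_le_biGaussIntegral u hm (hmρ t)
  rw [volume_real_pi_closedBall 0 hδ'.le, volume_real_pi_closedBall 0 hε.le] at hlow
  convert hlow using 1
  ring

end Cube

theorem variance_localization_general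
    {d : ℕ} (ρ : (Fin d → ℝ) → ℝ)
    (hρcont : Continuous ρ) (hρint : Integrable ρ)
    (hρ0 : ρ 0 = 1) (hρle : ∀ t, |ρ t| ≤ 1)
    -- `inf_t ρ(t) > -1`
    (hinf : ∃ m : ℝ, -1 < m ∧ ∀ t, m ≤ ρ t)
    -- for every `ε > 0`, `sup_{t ∉ (-ε,ε)^d} |ρ(t)| < 1`
    (hsup : ∀ ε : ℝ, 0 < ε → ∃ η : ℝ, η < 1 ∧
      ∀ t ∉ Set.pi Set.univ (fun _ : Fin d => Set.Ioo (-ε) ε), |ρ t| ≤ η)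
    -- moving level `u_T → ∞`
    (uT : ℝ → ℝ) (huT : Tendsto uT atTop atTop) :
    ∀ ε : ℝ, 0 < ε →
      Tendsto (fun T : ℝ =>
          (∫ t in Set.Icc (fun _ => -T) ((fun _ => T) : Fin d → ℝ),
              (∏ j, (T - |t j|)) * ∫ y in (0 : ℝ)..(ρ t), biGaussDensity (uT T) y)
            / (T ^ d * ∫ t in Set.Icc (fun _ => -ε) ((fun _ => ε) : Fin d → ℝ),
              ∫ y in (0 : ℝ)..(ρ t), biGaussDensity (uT T) y))
        atTop (nhds 1) := by
  intro ε hε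
  obtain ⟨m, hm, hm0, hmρ⟩ : ∃ m, -1 < m ∧ m ≤ 0 ∧ ∀ t, m ≤ ρ t := by
    obtain ⟨m, hm, hmρ⟩ := hinf
    exact ⟨min m 0, lt_min hm (by norm_num), min_le_right _ _,
      fun t => (min_le_left _ _).trans (hmρ t)⟩
  have hρ1 : ∀ t, ρ t ≤ 1 := fun t => (abs_le.1 (hρle t)).2
  obtain ⟨η, hη0, hη1, hηρ⟩ : ∃ η, 0 ≤ η ∧ η < 1 ∧ ∀ t ∉ closedBall 0 ε, |ρ t| ≤ η := by
    obtain ⟨η, hη1, hηρ⟩ := hsup ε hε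
    refine ⟨max η 0, le_max_right _ _, max_lt hη1 one_pos,
      fun t ht => (hηρ t ?_).trans (le_max_left _ _)⟩
    rw [pi_univ_Ioo_neg_const_const_eq_ball hε]
    exact fun h => ht (ball_subset_closedBall h)
  obtain ⟨μ, hημ, hμ1⟩ := exists_between hη1
  obtain ⟨θ, hμθ, hθ1⟩ := exists_between hμ1
  obtain ⟨hO, hGpos⟩ := exp_isBigO_setIntegral_biGaussIntegral hρcont hm hm0 hmρ hρ1
    (hη0.trans_lt hημ) hμθ (hρ0 ▸ hθ1) hε
  have hlim := tendsto_setIntegral_weight_mul_div (g := fun u t => biGaussIntegral u (ρ t))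
    (f := fun t => |ρ t|) (b := biGaussBound m 0) (c := biGaussBound m η) hε
    (fun u => (continuousOn_biGaussIntegral u hm hm0).comp_continuous hρcont
      fun t => ⟨hmρ t, hρ1 t⟩)
    hρint.abs (fun t => abs_nonneg _) (biGaussBound_nonneg m 0)
    (fun u t => neg_biGaussBound_le_biGaussIntegral u hm (hmρ t)) (biGaussBound_nonneg m η)
    (fun u t ht => abs_biGaussIntegral_le u hm hm0 (hmρ t)
      ((le_abs_self _).trans (hηρ t ht)) hη0 hη1)
    ((isLittleO_biGaussBound m (by norm_num) (hη0.trans_lt hημ)).trans_isBigO hO)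
    ((isLittleO_biGaussBound m (by linarith) hημ).trans_isBigO hO) hGpos huT
  refine hlim.congr' ?_
  filter_upwards [eventually_ge_atTop 0] with T hT
  rw [Icc_neg_const_const_eq_closedBall hT, Icc_neg_const_const_eq_closedBall hε.le,
    Fintype.card_fin]
  rfl

theorem variance_localization
    {d : ℕ} (hd : 0 < d) (ρ : (Fin d → ℝ) → ℝ)
    (hρcont : Continuous ρ) (hρint : Integrable ρ)
    (hρ0 : ρ 0 = 1) (hρle : ∀ t, |ρ t| ≤ 1)
    -- `inf_t ρ(t) > -1`
    (hinf : ∃ m : ℝ, -1 < m ∧ ∀ t, m ≤ ρ t)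
    -- for every `ε > 0`, `sup_{t ∉ (-ε,ε)^d} |ρ(t)| < 1`
    (hsup : ∀ ε : ℝ, 0 < ε → ∃ η : ℝ, η < 1 ∧
      ∀ t ∉ Set.pi Set.univ (fun _ : Fin d => Set.Ioo (-ε) ε), |ρ t| ≤ η)
    -- moving level `u_T → ∞`
    (uT : ℝ → ℝ) (huT : Tendsto uT atTop atTop) :
    ∀ ε : ℝ, 0 < ε →
      Tendsto (fun T : ℝ =>
          (∫ t in Set.Icc (fun _ => -T) ((fun _ => T) : Fin d → ℝ),
              (∏ j, (T - |t j|)) * ∫ y in (0 : ℝ)..(ρ t), biGaussDensity (uT T) y)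
            / (T ^ d * ∫ t in Set.Icc (fun _ => -ε) ((fun _ => ε) : Fin d → ℝ),
              ∫ y in (0 : ℝ)..(ρ t), biGaussDensity (uT T) y))
        atTop (nhds 1) :=
  variance_localization_general ρ hρcont hρint hρ0 hρle hinf hsup uT huT
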